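/- Fix 0 < L < U with κ := U/L and fix k ∈ ℕ. For each n ∈ ℕ define the quadratic function f_n : ℝⁿ → ℝ by f_n(x) = (1/2) xᵀ P x + q̃ᵀ x, where q̃ = (L(κ−1)/4)·e₁ ∈ ℝⁿ and P = (L(κ−1)/4)·Q̃ + L·I ∈ ℝⁿˣⁿ with Q̃ the circulant matrix whose rows are successive circular shifts of the first row (2, −1, 0, …, 0, −1); let x₀(n) be the unique minimizer of f_n. Then there is a sequence δ : ℕ → ℝ with lim_{n→∞} |δ(n)| = 0 such that for every n with 2k ≤ n and every sequence x⁽⁰⁾, x⁽¹⁾, …, x⁽ᵏ⁾ in ℝⁿ satisfying x⁽⁰⁾ = 0 and x⁽ʲ⁾ ∈ span{∇f_n(x⁽⁰⁾), …, ∇f_n(x⁽ʲ⁻¹⁾)} for all 1 ≤ j ≤ k, one has ‖x⁽ᵏ⁾ − x₀(n)‖ ≥ ‖x⁽⁰⁾ − x₀(n)‖ · ((1 − 1/√κ)/(1 + √κ)) · ((√κ − 1)/(√κ + 1))ᵏ − |δ(n)|. -/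

import Mathlib

/-!
We may take `δ = 0`. Put `σ = √κ` and `ρ = (σ - 1)/(σ + 1)`, the root in `(0, 1)` of
`(κ - 1)(1 + ρ²) = 2(κ + 1)ρ`. Then the vector with entries `ρ^i + ρ^(n-i)` is annihilated by
`P` away from coordinate `0`, so a suitable multiple `-B (ρ^i + ρ^(n-i))` solves `P v = -q̃`;
as `P` is positive semidefinite, this is the minimizer `x₀(n)`.

Since `P` couples only cyclic neighbours and `q̃` is supported at `0`, the `j`-th iterate of a
first order method vanishes at every coordinate at cyclic distance at least `j` from `0`.
For `2k ≤ n` the iterate `x⁽ᵏ⁾` thus vanishes at coordinate `k`, whence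
`‖x⁽ᵏ⁾ - x₀‖ ≥ B ρ^k`. On the other hand a geometric sum gives `‖x₀‖² (1 - ρ²) ≤ 4 B²`, and
`4 ((1 - 1/σ)/(1 + σ))² ≤ 1 - ρ²`.
-/

open scoped Matrix

/-- First row `(2, −1, 0, …, 0, −1)` of the circulant matrix `Q̃` (the `−1` entries at
positions `1` and `n−1` are added, so that the definition stays a genuine circulant for
every `n`). -/
noncomputable def circRow (n : ℕ) : Fin n → ℝ := fun i =>
  (if i.val = 0 then (2 : ℝ) else 0) + (if i.val = 1 then (-1 : ℝ) else 0) +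
    (if i.val = n - 1 then (-1 : ℝ) else 0)

/-- The matrix `P = (L(κ−1)/4)·Q̃ + L·I`. -/
noncomputable def Pmat (L κ : ℝ) (n : ℕ) : Matrix (Fin n) (Fin n) ℝ :=
  (L * (κ - 1) / 4) • Matrix.circulant (circRow n) + L • (1 : Matrix (Fin n) (Fin n) ℝ)

/-- The vector `q̃ = (L(κ−1)/4)·e₁`. -/
noncomputable def qtilde (L κ : ℝ) (n : ℕ) : EuclideanSpace ℝ (Fin n) := WithLp.toLp 2 fun i =>
  if i.val = 0 then L * (κ - 1) / 4 else 0

/-- The quadratic `f_n(x) = ½ xᵀ P x + q̃ᵀ x`. -/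
noncomputable def fQuad (L κ : ℝ) (n : ℕ) (x : EuclideanSpace ℝ (Fin n)) : ℝ :=
  (1 / 2) * ((fun i => x i) ⬝ᵥ (Pmat L κ n).mulVec fun i => x i) +
    (fun i => qtilde L κ n i) ⬝ᵥ fun i => x i

open Matrix WithLp

namespace Fin

variable {n : ℕ} [NeZero n]

theorem val_one_of_two_le (hn : 2 ≤ n) : ((1 : Fin n) : ℕ) = 1 := by
  rw [val_one', Nat.mod_eq_of_lt hn]

theorem val_add_one_of_two_le (hn : 2 ≤ n) (i : Fin n) :
    ((i + 1 : Fin n) : ℕ) = if (i : ℕ) + 1 = n then 0 else (i : ℕ) + 1 := by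
  rw [val_add, val_one_of_two_le hn]
  split_ifs with h
  · rw [h, Nat.mod_self]
  · exact Nat.mod_eq_of_lt (by omega)

theorem val_sub_one_of_two_le (hn : 2 ≤ n) (i : Fin n) :
    ((i - 1 : Fin n) : ℕ) = if (i : ℕ) = 0 then n - 1 else (i : ℕ) - 1 := by
  rw [val_sub, val_one_of_two_le hn]
  split_ifs with h
  · rw [h, add_zero, Nat.mod_eq_of_lt (by omega)]
  · rw [show n - 1 + i = i - 1 + n by omega, Nat.add_mod_right, Nat.mod_eq_of_lt (by omega)]

theorem val_neg_one_of_two_le (hn : 2 ≤ n) : ((-1 : Fin n) : ℕ) = n - 1 := by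
  rw [val_neg, if_neg (by simp [Fin.ext_iff]; omega), val_one_of_two_le hn]

end Fin

theorem Matrix.circulant_single_one_mulVec_apply {α : Type*} [AddCommGroup α] [Fintype α]
    [DecidableEq α] (k : α) (w : α → ℝ) (i : α) :
    (circulant (Pi.single k 1) *ᵥ w) i = w (i - k) := by
  have hk : ∀ j, i - j = k ↔ j = i - k := fun j => by
    constructor <;> rintro rfl <;> simp
  simp [mulVec, dotProduct, circulant_apply, Pi.single_apply, hk]

section Circulant

variable {n : ℕ} [NeZero n]

theorem circRow_eq (hn : 2 ≤ n) :
    circRow n = (2 : ℝ) • Pi.single 0 1 - Pi.single 1 1 - Pi.single (-1) 1 := by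
  funext d
  simp only [circRow, Pi.sub_apply, Pi.smul_apply, Pi.single_apply, Fin.ext_iff,
    Fin.val_zero, Fin.val_one_of_two_le hn, Fin.val_neg_one_of_two_le hn]
  split_ifs <;> norm_num

theorem circulant_circRow_mulVec_apply (hn : 2 ≤ n) (w : Fin n → ℝ) (i : Fin n) :
    (circulant (circRow n) *ᵥ w) i = 2 * w i - w (i - 1) - w (i + 1) := by
  simp [circRow_eq hn, circulant_sub, circulant_smul, sub_mulVec, smul_mulVec,
    circulant_single_one_mulVec_apply]

theorem circulant_circRow_isSymm (hn : 2 ≤ n) : (circulant (circRow n)).IsSymm := by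
  rw [circulant_isSymm_iff, circRow_eq hn]
  intro i
  simp only [Pi.sub_apply, Pi.smul_apply, Pi.single_apply, neg_eq_iff_eq_neg, neg_zero, neg_neg]
  ring

theorem circulant_circRow_posSemidef (hn : 2 ≤ n) : (circulant (circRow n)).PosSemidef := by
  refine .of_dotProduct_mulVec_nonneg
    (isHermitian_iff_isSymm.mpr (circulant_circRow_isSymm hn)) fun w => ?_
  have hprev : ∑ i, w i * w (i - 1) = ∑ i, w (i + 1) * w i := by
    rw [← Equiv.sum_comp (Equiv.addRight (1 : Fin n))]
    simp
  have hnext : ∑ i, w (i + 1) ^ 2 = ∑ i, w i ^ 2 :=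
    Equiv.sum_comp (Equiv.addRight (1 : Fin n)) fun i => w i ^ 2
  have hform : star w ⬝ᵥ circulant (circRow n) *ᵥ w = ∑ i, (w i - w (i + 1)) ^ 2 := by
    simp only [dotProduct, star_trivial, circulant_circRow_mulVec_apply hn]
    calc ∑ i, w i * (2 * w i - w (i - 1) - w (i + 1))
        = ∑ i, (w i - w (i + 1)) ^ 2 + (∑ i, w i ^ 2 - ∑ i, w (i + 1) ^ 2)
          + (∑ i, w (i + 1) * w i - ∑ i, w i * w (i - 1)) := by
          simp only [← Finset.sum_sub_distrib, ← Finset.sum_add_distrib]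
          exact Finset.sum_congr rfl fun i _ => by ring
      _ = ∑ i, (w i - w (i + 1)) ^ 2 := by rw [hprev, hnext]; ring
  rw [hform]
  positivity

end Circulant

section Pmat

variable {n : ℕ} [NeZero n] {L κ : ℝ}

theorem Pmat_mulVec_apply (hn : 2 ≤ n) (w : Fin n → ℝ) (i : Fin n) :
    (Pmat L κ n *ᵥ w) i = L * (κ - 1) / 4 * (2 * w i - w (i - 1) - w (i + 1)) + L * w i := by
  simp [Pmat, add_mulVec, smul_mulVec, circulant_circRow_mulVec_apply hn]

theorem Pmat_isHermitian (hn : 2 ≤ n) : (Pmat L κ n).IsHermitian :=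
  isHermitian_iff_isSymm.mpr (((circulant_circRow_isSymm hn).smul _).add (isSymm_one.smul _))

theorem Pmat_posSemidef (hn : 2 ≤ n) (hL : 0 ≤ L) (hκ : 1 ≤ κ) : (Pmat L κ n).PosSemidef := by
  have hc : 0 ≤ L * (κ - 1) / 4 := by have := sub_nonneg.mpr hκ; positivity
  exact ((circulant_circRow_posSemidef hn).smul hc).add (PosSemidef.one.smul hL)

end Pmat

section Quadratic

variable {ι : Type*} [Fintype ι]

theorem hasGradientAt_half_dotProduct_mulVec_add [DecidableEq ι] {P : Matrix ι ι ℝ}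
    (hP : P.IsHermitian) (q y : EuclideanSpace ℝ ι) :
    HasGradientAt (fun x : EuclideanSpace ℝ ι => 1 / 2 * (ofLp x ⬝ᵥ P *ᵥ ofLp x) + ofLp q ⬝ᵥ ofLp x)
      (toEuclideanCLM (𝕜 := ℝ) P y + q) y := by
  set T := toEuclideanCLM (𝕜 := ℝ) P
  have hT : (T : EuclideanSpace ℝ ι →ₗ[ℝ] EuclideanSpace ℝ ι).IsSymmetric :=
    isSymmetric_toEuclideanLin_iff.mpr hP
  have hf : (fun x : EuclideanSpace ℝ ι => 1 / 2 * (ofLp x ⬝ᵥ P *ᵥ ofLp x) + ofLp q ⬝ᵥ ofLp x)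
      = fun x => 1 / 2 * T.reApplyInnerSelf x + innerSL ℝ q x := by
    funext x
    simp [T, ContinuousLinearMap.reApplyInnerSelf_apply, EuclideanSpace.inner_eq_star_dotProduct,
      dotProduct_comm]
  rw [hasGradientAt_iff_hasFDerivAt, hf]
  refine (((hT.hasStrictFDerivAt_reApplyInnerSelf y).hasFDerivAt.const_mul _).add
    (innerSL ℝ q).hasFDerivAt).congr_fderiv ?_
  ext h
  simp

theorem Matrix.PosSemidef.half_dotProduct_mulVec_add_le {P : Matrix ι ι ℝ} (hP : P.PosSemidef)
    {q v : ι → ℝ} (hv : P *ᵥ v = -q) (z : ι → ℝ) :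
    1 / 2 * (v ⬝ᵥ P *ᵥ v) + q ⬝ᵥ v ≤ 1 / 2 * (z ⬝ᵥ P *ᵥ z) + q ⬝ᵥ z := by
  obtain ⟨w, rfl⟩ : ∃ w, z = v + w := ⟨z - v, by abel⟩
  have hsymm : v ⬝ᵥ P *ᵥ w = w ⬝ᵥ P *ᵥ v := by
    rw [dotProduct_mulVec, ← mulVec_transpose, (isHermitian_iff_isSymm.mp hP.1).eq,
      dotProduct_comm]
  have hw : 0 ≤ w ⬝ᵥ P *ᵥ w := by simpa using hP.dotProduct_mulVec_nonneg w
  simp only [mulVec_add, dotProduct_add, add_dotProduct, hsymm, hv, dotProduct_neg,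
    dotProduct_comm w q]
  linarith

end Quadratic

section VanishingAtDistGE

variable {n : ℕ}

variable (n) in
/-- The coordinates `m` with `j ≤ m ≤ n - j` are those at cyclic distance at least `j` from `0`. -/
def vanishingAtDistGE (j : ℕ) : Submodule ℝ (EuclideanSpace ℝ (Fin n)) where
  carrier := {y | ∀ m : Fin n, j ≤ (m : ℕ) → (m : ℕ) ≤ n - j → y m = 0}
  add_mem' ha hb m h₁ h₂ := by simp [ha m h₁ h₂, hb m h₁ h₂]
  zero_mem' _ _ _ := rfl
  smul_mem' _ _ ha m h₁ h₂ := by simp [ha m h₁ h₂]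

theorem mem_vanishingAtDistGE {j : ℕ} {y : EuclideanSpace ℝ (Fin n)} :
    y ∈ vanishingAtDistGE n j ↔ ∀ m : Fin n, j ≤ (m : ℕ) → (m : ℕ) ≤ n - j → y m = 0 :=
  Iff.rfl

theorem vanishingAtDistGE_mono : Monotone (vanishingAtDistGE n) := by
  intro i j hij y hy
  rw [mem_vanishingAtDistGE] at hy ⊢
  exact fun m h₁ h₂ => hy m (by omega) (by omega)

end VanishingAtDistGE

section Krylov

variable {n : ℕ} [NeZero n] {L κ : ℝ}

theorem gradient_fQuad (hn : 2 ≤ n) (y : EuclideanSpace ℝ (Fin n)) :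
    gradient (fQuad L κ n) y = toEuclideanCLM (𝕜 := ℝ) (Pmat L κ n) y + qtilde L κ n :=
  (hasGradientAt_half_dotProduct_mulVec_add (Pmat_isHermitian hn) _ y).gradient

theorem gradient_fQuad_mem_vanishingAtDistGE (hn : 2 ≤ n) {j : ℕ} {y : EuclideanSpace ℝ (Fin n)}
    (hy : y ∈ vanishingAtDistGE n j) : gradient (fQuad L κ n) y ∈ vanishingAtDistGE n (j + 1) := by
  rw [mem_vanishingAtDistGE] at hy ⊢
  intro m h₁ h₂
  have hprev := Fin.val_sub_one_of_two_le hn m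
  have hnext := Fin.val_add_one_of_two_le hn m
  have hq : qtilde L κ n m = 0 := if_neg (by omega)
  rw [gradient_fQuad hn, PiLp.add_apply, ofLp_toEuclideanCLM, Pmat_mulVec_apply hn, hq,
    hy m (by omega) (by omega), hy (m - 1) (by split_ifs at hprev <;> omega)
      (by split_ifs at hprev <;> omega),
    hy (m + 1) (by split_ifs at hnext <;> omega) (by split_ifs at hnext <;> omega)]
  ring

theorem iterate_mem_vanishingAtDistGE (hn : 2 ≤ n) {k : ℕ} {x : ℕ → EuclideanSpace ℝ (Fin n)}
    (hx0 : x 0 = 0)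
    (hspan : ∀ j, 1 ≤ j → j ≤ k →
      x j ∈ Submodule.span ℝ {g | ∃ i < j, g = gradient (fQuad L κ n) (x i)})
    {j : ℕ} (hj : j ≤ k) : x j ∈ vanishingAtDistGE n j := by
  induction j using Nat.strong_induction_on with
  | _ j ih =>
    rcases j.eq_zero_or_pos with rfl | hj₀
    · exact hx0 ▸ zero_mem _
    refine Submodule.span_le.mpr ?_ (hspan j hj₀ hj)
    rintro _ ⟨i, hij, rfl⟩
    exact vanishingAtDistGE_mono hij
      (gradient_fQuad_mem_vanishingAtDistGE hn (ih i hij (by omega)))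

end Krylov

def geomProfile (ρ : ℝ) (n : ℕ) : EuclideanSpace ℝ (Fin n) :=
  toLp 2 fun i => ρ ^ (i : ℕ) + ρ ^ (n - i)

section Minimizer

variable {n : ℕ} [NeZero n] {L κ ρ : ℝ}

theorem Pmat_mulVec_neg_smul_geomProfile (hn : 2 ≤ n) (hρ₀ : ρ ≠ 0)
    (hρ : (κ - 1) * (1 + ρ ^ 2) = 2 * (κ + 1) * ρ) {B : ℝ}
    (hB : B * ((1 - ρ ^ 2) * (1 - ρ ^ n)) = ρ) :
    Pmat L κ n *ᵥ ofLp (-B • geomProfile ρ n) = -ofLp (qtilde L κ n) := by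
  funext i
  have hprev := Fin.val_sub_one_of_two_le hn i
  have hnext := Fin.val_add_one_of_two_le hn i
  simp only [Pmat_mulVec_apply hn, geomProfile, qtilde, PiLp.smul_apply, smul_eq_mul, Pi.neg_apply]
  by_cases h₀ : (i : ℕ) = 0
  · rw [if_pos h₀] at hprev
    rw [if_neg (by omega)] at hnext
    have hpow : ρ ^ n = ρ ^ (n - 1) * ρ := by rw [← pow_succ]; congr 1; omega
    rw [hpow] at hB
    rw [hprev, hnext, h₀, if_pos rfl, Nat.sub_zero, show n - (n - 1) = 1 by omega, hpow]
    refine mul_left_cancel₀ hρ₀ ?_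
    linear_combination (B * (1 + ρ ^ (n - 1) * ρ) * L / 4) * hρ - (L * (κ - 1) / 4) * hB
  · rw [if_neg h₀] at hprev
    have hcur : ρ ^ (i : ℕ) + ρ ^ (n - i) = (ρ ^ ((i : ℕ) - 1) + ρ ^ (n - i - 1)) * ρ := by
      rw [add_mul, ← pow_succ, ← pow_succ, Nat.sub_add_cancel (by omega),
        Nat.sub_add_cancel (by omega)]
    have hleft : ρ ^ ((i - 1 : Fin n) : ℕ) + ρ ^ (n - (i - 1 : Fin n))
        = ρ ^ ((i : ℕ) - 1) + ρ ^ (n - i - 1) * ρ ^ 2 := by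
      rw [hprev, ← pow_add, show n - i - 1 + 2 = n - (i - 1) by omega]
    have hright : ρ ^ ((i + 1 : Fin n) : ℕ) + ρ ^ (n - (i + 1 : Fin n))
        = ρ ^ ((i : ℕ) - 1) * ρ ^ 2 + ρ ^ (n - i - 1) := by
      rw [hnext, ← pow_add]
      split_ifs with hlast
      · rw [show (i : ℕ) - 1 + 2 = n by omega, show n - i - 1 = 0 by omega, Nat.sub_zero]
        ring
      · rw [show (i : ℕ) - 1 + 2 = i + 1 by omega, show n - i - 1 = n - (i + 1) by omega]
    rw [hcur, hleft, hright, if_neg h₀]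
    linear_combination (B * (ρ ^ ((i : ℕ) - 1) + ρ ^ (n - i - 1)) * L / 4) * hρ

end Minimizer

section Norm

variable {ρ : ℝ} (hρ₀ : 0 ≤ ρ) (hρ₁ : ρ < 1)
include hρ₀ hρ₁

theorem norm_geomProfile_sq_mul_le (n : ℕ) : ‖geomProfile ρ n‖ ^ 2 * (1 - ρ ^ 2) ≤ 4 := by
  set r := ρ ^ 2 with hr
  have hr₀ : 0 ≤ r := by positivity
  have hr₁ : r < 1 := by nlinarith
  have hpow : ∀ m, r ^ m = (ρ ^ m) ^ 2 := fun m => by rw [hr, ← pow_mul, ← pow_mul, mul_comm]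
  have hgeom : (∑ i ∈ Finset.range n, r ^ i) * (1 - r) ≤ 1 := by
    nlinarith [geom_sum_mul r n, pow_nonneg hr₀ n]
  have hrefl : ∑ i ∈ Finset.range n, r ^ (n - i) ≤ ∑ i ∈ Finset.range n, r ^ i := by
    rw [← Finset.sum_range_reflect (fun i => r ^ i)]
    refine Finset.sum_le_sum fun i hi => ?_
    refine pow_le_pow_of_le_one hr₀ hr₁.le ?_
    have := Finset.mem_range.mp hi
    omega
  have hsq : ‖geomProfile ρ n‖ ^ 2 ≤ ∑ i ∈ Finset.range n, (2 * r ^ i + 2 * r ^ (n - i)) := by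
    rw [EuclideanSpace.norm_sq_eq,
      ← Fin.sum_univ_eq_sum_range (fun i => 2 * r ^ i + 2 * r ^ (n - i))]
    gcongr with i
    rw [geomProfile, PiLp.toLp_apply, Real.norm_eq_abs, sq_abs, hpow, hpow]
    nlinarith [sq_nonneg (ρ ^ (i : ℕ) - ρ ^ (n - i))]
  rw [Finset.sum_add_distrib, ← Finset.mul_sum, ← Finset.mul_sum] at hsq
  nlinarith

theorem norm_geomProfile_mul_le_one (n : ℕ) {C : ℝ} (hC : 4 * C ^ 2 ≤ 1 - ρ ^ 2) :
    ‖geomProfile ρ n‖ * C ≤ 1 := by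
  have h := norm_geomProfile_sq_mul_le hρ₀ hρ₁ n
  have hsq : (‖geomProfile ρ n‖ * C) ^ 2 ≤ 1 := by
    nlinarith [mul_le_mul_of_nonneg_left hC (sq_nonneg ‖geomProfile ρ n‖)]
  nlinarith

theorem norm_smul_geomProfile_mul_le_norm_sub {n : ℕ} {C : ℝ} (hC : 4 * C ^ 2 ≤ 1 - ρ ^ 2)
    (B : ℝ) {y : EuclideanSpace ℝ (Fin n)} {m : Fin n} (hy : y m = 0) :
    ‖B • geomProfile ρ n‖ * C * ρ ^ (m : ℕ) ≤ ‖y - B • geomProfile ρ n‖ :=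
  calc ‖B • geomProfile ρ n‖ * C * ρ ^ (m : ℕ)
      = |B| * (‖geomProfile ρ n‖ * C) * ρ ^ (m : ℕ) := by
        rw [norm_smul, Real.norm_eq_abs, mul_assoc |B|]
    _ ≤ |B| * ρ ^ (m : ℕ) := by
        gcongr
        exact mul_le_of_le_one_right (abs_nonneg B) (norm_geomProfile_mul_le_one hρ₀ hρ₁ n hC)
    _ ≤ |B| * (ρ ^ (m : ℕ) + ρ ^ (n - m)) := by
        gcongr
        exact le_add_of_nonneg_right (by positivity)
    _ = ‖(y - B • geomProfile ρ n) m‖ := by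
        have : 0 ≤ ρ ^ (m : ℕ) + ρ ^ (n - m) := by positivity
        simp [hy, geomProfile, abs_of_nonneg this]
    _ ≤ ‖y - B • geomProfile ρ n‖ := PiLp.norm_apply_le _ _

end Norm

section Rate

variable {σ : ℝ} (hσ : 1 < σ)
include hσ

theorem rate_pos : 0 < (σ - 1) / (σ + 1) := div_pos (by linarith) (by linarith)

theorem rate_lt_one : (σ - 1) / (σ + 1) < 1 := (div_lt_one (by linarith)).mpr (by linarith)

theorem rate_root :
    (σ ^ 2 - 1) * (1 + ((σ - 1) / (σ + 1)) ^ 2) = 2 * (σ ^ 2 + 1) * ((σ - 1) / (σ + 1)) := by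
  have : σ + 1 ≠ 0 := by linarith
  field_simp
  ring

theorem four_mul_prefactor_sq_le :
    4 * ((1 - 1 / σ) / (1 + σ)) ^ 2 ≤ 1 - ((σ - 1) / (σ + 1)) ^ 2 := by
  have hσ₀ : 0 < σ := by linarith
  rw [show (1 - 1 / σ) / (1 + σ) = (σ - 1) / (σ * (σ + 1)) by field_simp; ring,
    show 1 - ((σ - 1) / (σ + 1)) ^ 2 = 4 * σ / (σ + 1) ^ 2 by field_simp; ring,
    div_pow, mul_div_assoc', div_le_div_iff₀ (by positivity) (by positivity)]
  nlinarith [pow_pos hσ₀ 3, sq_nonneg (σ - 1)]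

end Rate

theorem fom_lower_bound_general (L U : ℝ) (hL : 0 < L) (hLU : L < U)
    (κ : ℝ) (hκ : κ = U / L) (k : ℕ)
    (x0 : (n : ℕ) → EuclideanSpace ℝ (Fin n))
    (huniq : ∀ n y, (∀ z, fQuad L κ n y ≤ fQuad L κ n z) → y = x0 n) :
    ∃ δ : ℕ → ℝ, Filter.Tendsto (fun n => |δ n|) Filter.atTop (nhds 0) ∧
      ∀ n, 2 * k ≤ n →
        ∀ x : ℕ → EuclideanSpace ℝ (Fin n), x 0 = 0 →
          (∀ j, 1 ≤ j → j ≤ k →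
            x j ∈ Submodule.span ℝ
              {g | ∃ i < j, g = gradient (fQuad L κ n) (x i)}) →
          ‖x k - x0 n‖ ≥
            ‖x 0 - x0 n‖ * ((1 - 1 / Real.sqrt κ) / (1 + Real.sqrt κ)) *
                ((Real.sqrt κ - 1) / (Real.sqrt κ + 1)) ^ k -
              |δ n| := by
  refine ⟨0, by simp, fun n hkn x hx0 hspan => ?_⟩
  have hκ₁ : 1 < κ := hκ ▸ (one_lt_div hL).mpr hLU
  have hσ : 1 < √κ := Real.lt_sqrt_of_sq_lt (by linarith)
  have hC := four_mul_prefactor_sq_le hσ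
  set ρ := (√κ - 1) / (√κ + 1)
  set C := (1 - 1 / √κ) / (1 + √κ)
  rw [Pi.zero_apply, abs_zero, sub_zero, hx0, zero_sub, norm_neg, ge_iff_le]
  rcases k.eq_zero_or_pos with rfl | hk
  · simpa [hx0] using mul_le_of_le_one_right (norm_nonneg (x0 n)) (show C ≤ 1 by nlinarith)
  have : NeZero n := ⟨by omega⟩
  have hn : 2 ≤ n := by omega
  have hρ₀ := rate_pos hσ
  have hρ₁ := rate_lt_one hσ
  have hroot : (κ - 1) * (1 + ρ ^ 2) = 2 * (κ + 1) * ρ := by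
    simpa [Real.sq_sqrt (by linarith : 0 ≤ κ)] using rate_root hσ
  have hρn : ρ ^ n < 1 := pow_lt_one₀ hρ₀.le hρ₁ (by omega)
  have hB : ρ / ((1 - ρ ^ 2) * (1 - ρ ^ n)) * ((1 - ρ ^ 2) * (1 - ρ ^ n)) = ρ :=
    div_mul_cancel₀ _ (mul_pos (by nlinarith) (by linarith)).ne'
  rw [← huniq n _ fun z => (Pmat_posSemidef hn hL.le hκ₁.le).half_dotProduct_mulVec_add_le
    (Pmat_mulVec_neg_smul_geomProfile hn hρ₀.ne' hroot hB) z]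
  have hxk : x k ⟨k, by omega⟩ = 0 :=
    mem_vanishingAtDistGE.mp (iterate_mem_vanishingAtDistGE hn hx0 hspan le_rfl) _ le_rfl
      (show k ≤ n - k by omega)
  exact norm_smul_geomProfile_mul_le_norm_sub hρ₀.le hρ₁ hC _ hxk

/-- lower bound on the error of any first order method. For fixed
`0 < L < U`, `κ = U/L`, `k ∈ ℕ`, letting `x₀(n)` be the unique minimizer of `f_n`,
there is a sequence `δ(n) → 0` such that for all `n ≥ 2k` and any FOM iterates
`x⁽⁰⁾ = 0`, `x⁽ʲ⁾ ∈ span{∇f_n(x⁽⁰⁾), …, ∇f_n(x⁽ʲ⁻¹⁾)}` (`1 ≤ j ≤ k`),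
`‖x⁽ᵏ⁾ − x₀(n)‖ ≥ ‖x⁽⁰⁾ − x₀(n)‖ ((1 − 1/√κ)/(1 + √κ)) ((√κ−1)/(√κ+1))ᵏ − |δ(n)|`. -/
theorem fom_lower_bound (L U : ℝ) (hL : 0 < L) (hLU : L < U)
    (κ : ℝ) (hκ : κ = U / L) (k : ℕ)
    (x0 : (n : ℕ) → EuclideanSpace ℝ (Fin n))
    (hmin : ∀ n y, fQuad L κ n (x0 n) ≤ fQuad L κ n y)
    (huniq : ∀ n y, (∀ z, fQuad L κ n y ≤ fQuad L κ n z) → y = x0 n) :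
    ∃ δ : ℕ → ℝ, Filter.Tendsto (fun n => |δ n|) Filter.atTop (nhds 0) ∧
      ∀ n, 2 * k ≤ n →
        ∀ x : ℕ → EuclideanSpace ℝ (Fin n), x 0 = 0 →
          (∀ j, 1 ≤ j → j ≤ k →
            x j ∈ Submodule.span ℝ
              {g | ∃ i < j, g = gradient (fQuad L κ n) (x i)}) →
          ‖x k - x0 n‖ ≥
            ‖x 0 - x0 n‖ * ((1 - 1 / Real.sqrt κ) / (1 + Real.sqrt κ)) *
                ((Real.sqrt κ - 1) / (Real.sqrt κ + 1)) ^ k -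
              |δ n| :=
  fom_lower_bound_general L U hL hLU κ hκ k x0 huniq
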